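/- Let q be a nonzero integer, d ≥ 1, and let c_0, …, c_{d−1}, e_1, …, e_d be integers with e_d ∈ {1, −1}. Set h = F^d + Σ_{i=0}^{d−1} c_i F^i + Σ_{j=1}^{d} e_j V^j ∈ ℤ[F,V] and P(X) = X^{2d} + Σ_{i=0}^{d−1} c_i X^{d+i} + Σ_{j=1}^{d} e_j q^j X^{d−j} ∈ ℤ[X]. Then for every prime ℓ not dividing q there is an isomorphism of ℤ_ℓ-algebras ℤ_ℓ ⊗_ℤ ( ℤ[F,V]/(FV − q, h) ) ≅ ℤ_ℓ[X]/(P) sending 1 ⊗ F to the residue class of X (under which the image of X is invertible and 1 ⊗ V corresponds to q·X⁻¹). -/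

import Mathlib

/-!
Since `ℓ ∤ q` and `e_d = ±1`, the constant term `e_d q^d` of `P` is a unit of `ℤ_ℓ`, so `X` is
invertible in `ℤ_ℓ[X]/(P)`. As `X^d h(X, q/X) = P(X)`, the assignment `F ↦ X`, `V ↦ q X⁻¹`
kills `FV - q` and `h`, and conversely `X ↦ 1 ⊗ F` kills `P`, because `F^d h(F, V) ≡ P(F)` modulo
`FV - q`. The two maps agree with the identity on generators: `1 ⊗ V` is recovered as `q (1 ⊗ F)⁻¹`.
-/

open MvPolynomial in
/-- The variable `F` in `ℤ[F, V]`. -/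
noncomputable def Fvar : MvPolynomial (Fin 2) ℤ := X 0

open MvPolynomial in
/-- The variable `V` in `ℤ[F, V]`. -/
noncomputable def Vvar : MvPolynomial (Fin 2) ℤ := X 1

open MvPolynomial in
/-- The polynomial `h = F^d + Σ_{i=0}^{d-1} c_i F^i + Σ_{j=1}^{d} e_j V^j ∈ ℤ[F, V]`. -/
noncomputable def hPoly (d : ℕ) (c e : ℕ → ℤ) : MvPolynomial (Fin 2) ℤ :=
  Fvar ^ d + (∑ i ∈ Finset.range d, C (c i) * Fvar ^ i) +
    ∑ j ∈ Finset.Icc 1 d, C (e j) * Vvar ^ j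

/-- The ring `ℤ[F,V]/(FV - q, h)` modelling the minimal central order `R_w`. -/
noncomputable abbrev Rw (q : ℤ) (d : ℕ) (c e : ℕ → ℤ) : Type :=
  MvPolynomial (Fin 2) ℤ ⧸
    Ideal.span {Fvar * Vvar - MvPolynomial.C q, hPoly d c e}

/-- The polynomial `P(X) = X^{2d} + Σ_{i=0}^{d-1} c_i X^{d+i} + Σ_{j=1}^{d} e_j q^j X^{d-j}`
with coefficients in `ℤ_ℓ`. -/
noncomputable def Pw (q : ℤ) (d : ℕ) (c e : ℕ → ℤ) (ℓ : ℕ) [Fact ℓ.Prime] :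
    Polynomial ℤ_[ℓ] :=
  Polynomial.X ^ (2 * d) +
    (∑ i ∈ Finset.range d, Polynomial.C ((c i : ℤ_[ℓ])) * Polynomial.X ^ (d + i)) +
    ∑ j ∈ Finset.Icc 1 d, Polynomial.C (((e j * q ^ j : ℤ) : ℤ_[ℓ])) * Polynomial.X ^ (d - j)

open scoped TensorProduct

lemma PadicInt.isUnit_intCast_of_not_dvd {ℓ : ℕ} [Fact ℓ.Prime] {q : ℤ} (hℓ : ¬ (ℓ : ℤ) ∣ q) :
    IsUnit (q : ℤ_[ℓ]) := by
  by_contra h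
  exact hℓ ((PadicInt.norm_int_lt_one_iff_dvd q).1 (PadicInt.not_isUnit_iff.1 h))

open Polynomial in
lemma Polynomial.isUnit_mk_X_of_isUnit_coeff_zero {R : Type*} [CommRing R] {p : R[X]}
    (hp0 : IsUnit (p.coeff 0)) : IsUnit (Ideal.Quotient.mk (Ideal.span {p}) X) := by
  obtain ⟨g, hg⟩ := X_dvd_sub_C (p := p)
  have hp : Ideal.Quotient.mk (Ideal.span {p}) p = 0 :=
    Ideal.Quotient.eq_zero_iff_mem.2 (Ideal.mem_span_singleton_self p)
  have hXg : Ideal.Quotient.mk (Ideal.span {p}) X * Ideal.Quotient.mk _ g =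
      -Ideal.Quotient.mk _ (C (p.coeff 0)) := by
    rw [← map_mul, ← hg, map_sub, hp, zero_sub]
  refine isUnit_of_mul_isUnit_left (y := Ideal.Quotient.mk _ g) ?_
  rw [hXg]
  exact ((hp0.map C).map (Ideal.Quotient.mk _)).neg

section

variable {q : ℤ} {d : ℕ} {c e : ℕ → ℤ} {ℓ : ℕ} [Fact ℓ.Prime]

lemma Pw_coeff_zero (hd : 1 ≤ d) : (Pw q d c e ℓ).coeff 0 = ((e d * q ^ d : ℤ) : ℤ_[ℓ]) := by
  rw [Polynomial.coeff_zero_eq_eval_zero, Pw]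
  simp only [Polynomial.eval_add, Polynomial.eval_finsetSum, Polynomial.eval_mul,
    Polynomial.eval_C, Polynomial.eval_pow, Polynomial.eval_X]
  rw [Finset.sum_eq_single_of_mem d (Finset.mem_Icc.2 ⟨hd, le_rfl⟩) fun j hj hjd => by
      rw [zero_pow (by grind), mul_zero]]
  have hc : ∀ i ∈ Finset.range d, (c i : ℤ_[ℓ]) * 0 ^ (d + i) = 0 := fun i _ => by
    rw [zero_pow (by omega), mul_zero]
  rw [Finset.sum_eq_zero hc, zero_pow (by omega), Nat.sub_self, pow_zero, mul_one, zero_add,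
    zero_add]

lemma aeval_Pw_eq {A : Type*} [CommRing A] [Algebra ℤ_[ℓ] A]
    (φ : MvPolynomial (Fin 2) ℤ →+* A) (hφ : φ Fvar * φ Vvar = q) :
    Polynomial.aeval (φ Fvar) (Pw q d c e ℓ) = φ (Fvar ^ d * hPoly d c e) := by
  have hV : ∀ j ∈ Finset.Icc 1 d, φ Fvar ^ d * φ Vvar ^ j = (q : A) ^ j * φ Fvar ^ (d - j) := by
    intro j hj
    rw [← hφ, mul_pow, mul_right_comm, ← pow_add, Nat.add_sub_cancel' (Finset.mem_Icc.1 hj).2]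
  simp only [Pw, hPoly, map_add, map_sum, map_mul, map_pow, Polynomial.aeval_X,
    eq_intCast, map_intCast, Int.cast_mul, Int.cast_pow]
  rw [mul_add, mul_add, Finset.mul_sum, Finset.mul_sum]
  refine congrArg₂ (· + ·) (congrArg₂ (· + ·) (by ring) (Finset.sum_congr rfl fun i _ => by ring))
    (Finset.sum_congr rfl fun j hj => by rw [mul_left_comm, hV j hj]; ring)

lemma isUnit_mk_X (hd : 1 ≤ d) (hed : e d = 1 ∨ e d = -1) (hℓ : ¬ (ℓ : ℤ) ∣ q) :
    IsUnit (Ideal.Quotient.mk (Ideal.span {Pw q d c e ℓ}) Polynomial.X) := by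
  refine Polynomial.isUnit_mk_X_of_isUnit_coeff_zero ?_
  rw [Pw_coeff_zero hd, Int.cast_mul, Int.cast_pow]
  refine IsUnit.mul ?_ ((PadicInt.isUnit_intCast_of_not_dvd hℓ).pow d)
  rcases hed with h | h <;> simp [h]

variable (q d c e) in
noncomputable def Rw.lift {A : Type*} [CommRing A] [Algebra ℤ A] (x v : A) (hxv : x * v = q)
    (hh : MvPolynomial.aeval ![x, v] (hPoly d c e) = 0) : Rw q d c e →ₐ[ℤ] A :=
  Ideal.Quotient.liftₐ _ (MvPolynomial.aeval ![x, v]) fun a ha => by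
    have hFV : Fvar * Vvar - MvPolynomial.C q ∈ RingHom.ker (MvPolynomial.aeval ![x, v]) := by
      simp [RingHom.mem_ker, Fvar, Vvar, hxv]
    exact Ideal.span_le.2 (Set.insert_subset_iff.2 ⟨hFV, Set.singleton_subset_iff.2 hh⟩) ha

lemma Rw.lift_mk {A : Type*} [CommRing A] [Algebra ℤ A] (x v : A) (hxv : x * v = q)
    (hh : MvPolynomial.aeval ![x, v] (hPoly d c e) = 0) (p : MvPolynomial (Fin 2) ℤ) :
    Rw.lift q d c e x v hxv hh (Ideal.Quotient.mk _ p) = MvPolynomial.aeval ![x, v] p :=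
  rfl

variable (q d c e ℓ) in
noncomputable def baseChangeMk : MvPolynomial (Fin 2) ℤ →+* ℤ_[ℓ] ⊗[ℤ] Rw q d c e :=
  Algebra.TensorProduct.includeRight.toRingHom.comp (Ideal.Quotient.mk _)

lemma baseChangeMk_apply (p : MvPolynomial (Fin 2) ℤ) :
    baseChangeMk q d c e ℓ p = 1 ⊗ₜ Ideal.Quotient.mk _ p :=
  rfl

lemma baseChangeMk_eq_zero {p : MvPolynomial (Fin 2) ℤ}
    (hp : p ∈ Ideal.span {Fvar * Vvar - MvPolynomial.C q, hPoly d c e}) :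
    baseChangeMk q d c e ℓ p = 0 := by
  rw [baseChangeMk, RingHom.comp_apply, Ideal.Quotient.eq_zero_iff_mem.2 hp, map_zero]

lemma baseChangeMk_Fvar_mul_Vvar :
    baseChangeMk q d c e ℓ Fvar * baseChangeMk q d c e ℓ Vvar = q := by
  have h := baseChangeMk_eq_zero (c := c) (e := e) (ℓ := ℓ)
    (Ideal.subset_span (Set.mem_insert (Fvar * Vvar - MvPolynomial.C q) {hPoly d c e}))
  have hC : baseChangeMk q d c e ℓ (MvPolynomial.C q) = q :=
    eq_intCast ((baseChangeMk q d c e ℓ).comp MvPolynomial.C) q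
  rwa [map_sub, map_mul, hC, sub_eq_zero] at h

lemma aeval_baseChangeMk_Fvar_Pw :
    Polynomial.aeval (baseChangeMk q d c e ℓ Fvar) (Pw q d c e ℓ) = 0 := by
  -- Naming the tensor product lets its `CommRing` structure be found by unification.
  rw [aeval_Pw_eq (A := ℤ_[ℓ] ⊗[ℤ] Rw q d c e) _ baseChangeMk_Fvar_mul_Vvar]
  exact baseChangeMk_eq_zero
    (Ideal.mul_mem_left _ _ (Ideal.subset_span (Set.mem_insert_of_mem _ rfl)))

variable (q d c e ℓ) in
noncomputable def toBaseChange :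
    Polynomial ℤ_[ℓ] ⧸ Ideal.span {Pw q d c e ℓ} →ₐ[ℤ_[ℓ]] ℤ_[ℓ] ⊗[ℤ] Rw q d c e :=
  Ideal.Quotient.liftₐ _ (Polynomial.aeval (baseChangeMk q d c e ℓ Fvar)) fun a ha => by
    obtain ⟨b, rfl⟩ := Ideal.mem_span_singleton'.1 ha
    rw [map_mul]
    exact mul_eq_zero_of_right (M₀ := ℤ_[ℓ] ⊗[ℤ] Rw q d c e) _ aeval_baseChangeMk_Fvar_Pw

lemma toBaseChange_mk_X :
    toBaseChange q d c e ℓ (Ideal.Quotient.mk _ Polynomial.X) = 1 ⊗ₜ Ideal.Quotient.mk _ Fvar :=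
  Polynomial.aeval_X _

local notation "𝒬" => Polynomial ℤ_[ℓ] ⧸ Ideal.span {Pw q d c e ℓ}

local notation "𝓍" => Ideal.Quotient.mk (Ideal.span {Pw q d c e ℓ}) Polynomial.X

variable (hX : IsUnit (Ideal.Quotient.mk (Ideal.span {Pw q d c e ℓ}) Polynomial.X))
include hX

lemma mk_X_mul_intCast_mul_inv :
    𝓍 * (q * (↑hX.unit⁻¹ : 𝒬)) = q := by
  rw [mul_left_comm, hX.mul_val_inv, mul_one]

lemma aeval_mk_X_hPoly :
    MvPolynomial.aeval ![𝓍, q * (↑hX.unit⁻¹ : 𝒬)] (hPoly d c e) = 0 := by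
  let φ : MvPolynomial (Fin 2) ℤ →+* 𝒬 :=
    (MvPolynomial.aeval (R := ℤ) (σ := Fin 2) ![𝓍, q * (↑hX.unit⁻¹ : 𝒬)]).toRingHom
  have hφF : φ Fvar = 𝓍 := by simp [φ, Fvar]
  have hφ : φ Fvar * φ Vvar = q := by
    simpa [φ, Fvar, Vvar] using mk_X_mul_intCast_mul_inv hX
  have hP : φ (Fvar ^ d * hPoly d c e) = 0 := by
    rw [← aeval_Pw_eq (ℓ := ℓ) φ hφ, hφF, ← Ideal.Quotient.mkₐ_eq_mk ℤ_[ℓ],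
      Polynomial.aeval_algHom_apply, Polynomial.aeval_X_left_apply, Ideal.Quotient.mkₐ_eq_mk,
      Ideal.Quotient.eq_zero_iff_mem]
    exact Ideal.mem_span_singleton_self _
  rw [map_mul, map_pow, hφF] at hP
  exact (hX.pow d).mul_right_eq_zero.1 hP

noncomputable def fromBaseChange : ℤ_[ℓ] ⊗[ℤ] Rw q d c e →ₐ[ℤ_[ℓ]] 𝒬 :=
  Algebra.TensorProduct.lift (Algebra.ofId ℤ_[ℓ] 𝒬)
    (Rw.lift q d c e _ _ (mk_X_mul_intCast_mul_inv hX) (aeval_mk_X_hPoly hX))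
    fun _ _ => Commute.all _ _

lemma fromBaseChange_one_tmul_mk (p : MvPolynomial (Fin 2) ℤ) :
    fromBaseChange hX (1 ⊗ₜ Ideal.Quotient.mk _ p) =
      MvPolynomial.aeval ![𝓍, q * (↑hX.unit⁻¹ : 𝒬)] p := by
  rw [fromBaseChange, Algebra.TensorProduct.lift_tmul, map_one, one_mul, Rw.lift_mk]

lemma fromBaseChange_one_tmul_mk_Fvar :
    fromBaseChange hX (1 ⊗ₜ Ideal.Quotient.mk _ Fvar) = 𝓍 := by
  rw [fromBaseChange_one_tmul_mk]
  simp [Fvar]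

lemma fromBaseChange_one_tmul_mk_Vvar :
    fromBaseChange hX (1 ⊗ₜ Ideal.Quotient.mk _ Vvar) = q * (↑hX.unit⁻¹ : 𝒬) := by
  rw [fromBaseChange_one_tmul_mk]
  simp [Vvar]

lemma fromBaseChange_comp_toBaseChange :
    (fromBaseChange hX).comp (toBaseChange q d c e ℓ) = AlgHom.id ℤ_[ℓ] 𝒬 := by
  refine Ideal.Quotient.algHom_ext ℤ_[ℓ] (Polynomial.algHom_ext ?_)
  show fromBaseChange hX (toBaseChange q d c e ℓ 𝓍) = 𝓍
  rw [toBaseChange_mk_X, fromBaseChange_one_tmul_mk_Fvar]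

lemma toBaseChange_comp_fromBaseChange :
    (toBaseChange q d c e ℓ).comp (fromBaseChange hX) =
      AlgHom.id ℤ_[ℓ] (ℤ_[ℓ] ⊗[ℤ] Rw q d c e) := by
  refine Algebra.TensorProduct.ext (Subsingleton.elim _ _)
    (Ideal.Quotient.algHom_ext ℤ (MvPolynomial.algHom_ext fun i => ?_))
  fin_cases i
  · show toBaseChange q d c e ℓ (fromBaseChange hX (1 ⊗ₜ Ideal.Quotient.mk _ Fvar)) =
      1 ⊗ₜ Ideal.Quotient.mk _ Fvar
    rw [fromBaseChange_one_tmul_mk_Fvar, toBaseChange_mk_X]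
  · show toBaseChange q d c e ℓ (fromBaseChange hX (1 ⊗ₜ Ideal.Quotient.mk _ Vvar)) =
      1 ⊗ₜ Ideal.Quotient.mk _ Vvar
    rw [fromBaseChange_one_tmul_mk_Vvar, map_mul, map_intCast]
    set y := toBaseChange q d c e ℓ ↑hX.unit⁻¹
    have hFV := baseChangeMk_Fvar_mul_Vvar (q := q) (d := d) (c := c) (e := e) (ℓ := ℓ)
    rw [baseChangeMk_apply, baseChangeMk_apply] at hFV
    have hFy : 1 ⊗ₜ Ideal.Quotient.mk _ Fvar * y = 1 := by
      rw [← toBaseChange_mk_X, ← map_mul, hX.mul_val_inv]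
      exact (toBaseChange q d c e ℓ).map_one
    linear_combination (1 ⊗ₜ Ideal.Quotient.mk _ Vvar) * hFy - y * hFV

end

open scoped TensorProduct in
theorem stmt_6_general (q : ℤ) (d : ℕ) (hd : 1 ≤ d) (c e : ℕ → ℤ)
    (hed : e d = 1 ∨ e d = -1) (ℓ : ℕ) [Fact ℓ.Prime] (hℓ : ¬ ((ℓ : ℤ) ∣ q)) :
    ∃ φ : (ℤ_[ℓ] ⊗[ℤ] Rw q d c e) ≃ₐ[ℤ_[ℓ]]
        (Polynomial ℤ_[ℓ] ⧸ Ideal.span {Pw q d c e ℓ}),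
      φ ((1 : ℤ_[ℓ]) ⊗ₜ[ℤ]
            (Ideal.Quotient.mk (Ideal.span {Fvar * Vvar - MvPolynomial.C q, hPoly d c e}) Fvar)) =
          Ideal.Quotient.mk (Ideal.span {Pw q d c e ℓ}) Polynomial.X ∧
      IsUnit (Ideal.Quotient.mk (Ideal.span {Pw q d c e ℓ}) Polynomial.X) ∧
      φ ((1 : ℤ_[ℓ]) ⊗ₜ[ℤ]
            (Ideal.Quotient.mk (Ideal.span {Fvar * Vvar - MvPolynomial.C q, hPoly d c e}) Vvar)) *
          Ideal.Quotient.mk (Ideal.span {Pw q d c e ℓ}) Polynomial.X =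
        (q : Polynomial ℤ_[ℓ] ⧸ Ideal.span {Pw q d c e ℓ}) := by
  have hX := isUnit_mk_X (c := c) hd hed hℓ
  refine ⟨AlgEquiv.ofAlgHom (fromBaseChange hX) (toBaseChange q d c e ℓ)
    (fromBaseChange_comp_toBaseChange hX) (toBaseChange_comp_fromBaseChange hX),
    fromBaseChange_one_tmul_mk_Fvar hX, hX, ?_⟩
  rw [AlgEquiv.ofAlgHom_apply, fromBaseChange_one_tmul_mk_Vvar, mul_comm]
  exact mk_X_mul_intCast_mul_inv hX

open scoped TensorProduct in
/-- For every prime `ℓ` not dividing `q` there is an isomorphism of `ℤ_ℓ`-algebras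
`ℤ_ℓ ⊗_ℤ (ℤ[F,V]/(FV - q, h)) ≅ ℤ_ℓ[X]/(P)` sending `1 ⊗ F` to the class of `X`
(under which the image of `X` is invertible and `1 ⊗ V` corresponds to `q·X⁻¹`). -/
theorem stmt_6 (q : ℤ) (hq : q ≠ 0) (d : ℕ) (hd : 1 ≤ d) (c e : ℕ → ℤ)
    (hed : e d = 1 ∨ e d = -1) (ℓ : ℕ) [Fact ℓ.Prime] (hℓ : ¬ ((ℓ : ℤ) ∣ q)) :
    ∃ φ : (ℤ_[ℓ] ⊗[ℤ] Rw q d c e) ≃ₐ[ℤ_[ℓ]]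
        (Polynomial ℤ_[ℓ] ⧸ Ideal.span {Pw q d c e ℓ}),
      φ ((1 : ℤ_[ℓ]) ⊗ₜ[ℤ]
            (Ideal.Quotient.mk (Ideal.span {Fvar * Vvar - MvPolynomial.C q, hPoly d c e}) Fvar)) =
          Ideal.Quotient.mk (Ideal.span {Pw q d c e ℓ}) Polynomial.X ∧
      IsUnit (Ideal.Quotient.mk (Ideal.span {Pw q d c e ℓ}) Polynomial.X) ∧
      φ ((1 : ℤ_[ℓ]) ⊗ₜ[ℤ]
            (Ideal.Quotient.mk (Ideal.span {Fvar * Vvar - MvPolynomial.C q, hPoly d c e}) Vvar)) *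
          Ideal.Quotient.mk (Ideal.span {Pw q d c e ℓ}) Polynomial.X =
        (q : Polynomial ℤ_[ℓ] ⧸ Ideal.span {Pw q d c e ℓ}) :=
  stmt_6_general q d hd c e hed ℓ hℓ
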